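/- For quaternions x and y, y belongs to the 2-sphere [x] = {x₀ + i x₁ : i ∈ 𝕊} (where x = x₀ + i_x x₁ with x₀ = Re(x), x₁ = |Im(x)|) if and only if there exists a quaternion q with |q| = 1 such that y = q⁻¹ x q. -/

import Mathlib

/-!
Conjugation by a unit quaternion fixes the real part and the norm, so it moves `Im x` within the
sphere of imaginary quaternions of norm `‖Im x‖`. Conversely, any two square roots `u`, `v` of
`-1` in a division ring are conjugate: `u (1 - u v) = (1 - u v) v`, and `1 - u v ≠ 0` unless
`v = -u`, a case handled by passing through a third square root `m ≠ ±u`. The imaginary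
quaternions of norm one are such square roots, and rescaling a conjugator to norm one
does not change the conjugation.
-/

open Quaternion

section Ring

variable {R : Type*} [Ring R] {u v : R}

theorem mul_one_sub_mul_eq_one_sub_mul_mul (hu : u * u = -1) (hv : v * v = -1) :
    u * (1 - u * v) = (1 - u * v) * v := by
  rw [mul_sub, sub_mul, ← mul_assoc, hu, mul_assoc, hv]
  noncomm_ring

theorem one_sub_mul_ne_zero_of_ne_neg (hu : u * u = -1) (huv : v ≠ -u) : 1 - u * v ≠ 0 := by
  intro h
  apply huv
  calc v = -(u * u * v) := by rw [hu, neg_one_mul, neg_neg]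
    _ = -u := by rw [mul_assoc, ← sub_eq_zero.mp h, mul_one]

end Ring

section DivisionRing

variable {D : Type*} [DivisionRing D] {u v : D}

theorem isConj_of_mul_self_eq_neg_one_of_ne_neg (hu : u * u = -1) (hv : v * v = -1)
    (huv : v ≠ -u) : IsConj u v :=
  IsConj.symm ⟨Units.mk0 _ (one_sub_mul_ne_zero_of_ne_neg hu huv),
    (mul_one_sub_mul_eq_one_sub_mul_mul hu hv).symm⟩

theorem isConj_of_mul_self_eq_neg_one {m : D} (hu : u * u = -1) (hv : v * v = -1)
    (hm : m * m = -1) (hmu : m ≠ u) (hmu' : m ≠ -u) : IsConj u v := by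
  by_cases huv : v = -u
  · exact (isConj_of_mul_self_eq_neg_one_of_ne_neg hu hm hmu').trans
      (isConj_of_mul_self_eq_neg_one_of_ne_neg hm hv (by rwa [huv, ne_eq, neg_inj, eq_comm]))
  · exact isConj_of_mul_self_eq_neg_one_of_ne_neg hu hv huv

end DivisionRing

theorem IsConj.smul {M α : Type*} [Monoid α] [SMul M α] [SMulCommClass M α α]
    [IsScalarTower M α α] {a b : α} (h : IsConj a b) (r : M) : IsConj (r • a) (r • b) :=
  let ⟨c, hc⟩ := h
  ⟨c, hc.smul_right r⟩

section NormedDivisionRing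

variable {D : Type*} [NormedDivisionRing D] [NormedAlgebra ℝ D]

theorem isConj_iff_exists_norm_eq_one {a b : D} :
    IsConj a b ↔ ∃ q : D, ‖q‖ = 1 ∧ b = q⁻¹ * a * q := by
  rw [GroupWithZero.isConj_iff₀]
  constructor
  · rintro ⟨c, hc, rfl⟩
    have hnc : ‖c‖ ≠ 0 := norm_ne_zero_iff.mpr hc
    refine ⟨‖c‖ • c⁻¹, by rw [norm_smul, norm_norm, norm_inv, mul_inv_cancel₀ hnc], ?_⟩
    rw [smul_inv₀, inv_inv, smul_mul_assoc, smul_mul_assoc, mul_smul_comm, smul_smul,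
      inv_mul_cancel₀ hnc, one_smul]
  · rintro ⟨q, hq, rfl⟩
    exact ⟨q⁻¹, inv_ne_zero (norm_ne_zero_iff.mp (hq.trans_ne one_ne_zero)), by rw [inv_inv]⟩

end NormedDivisionRing

namespace Quaternion

theorem mul_self_eq_neg_one {u : ℍ[ℝ]} (hr : u.re = 0) (hn : ‖u‖ = 1) : u * u = -1 := by
  rw [← sq, sq_eq_neg_normSq.mpr hr, normSq_eq_norm_mul_self, hn, mul_one, coe_one]

theorem norm_eq_one_iff_normSq_eq_one {x : ℍ[ℝ]} : ‖x‖ = 1 ↔ normSq x = 1 := by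
  rw [normSq_eq_norm_mul_self, ← sq, pow_eq_one_iff_of_nonneg (norm_nonneg x) two_ne_zero]

theorem exists_re_eq_zero_norm_eq_one_ne_ne_neg (u : ℍ[ℝ]) :
    ∃ m : ℍ[ℝ], m.re = 0 ∧ ‖m‖ = 1 ∧ m ≠ u ∧ m ≠ -u := by
  set i : ℍ[ℝ] := ⟨0, 1, 0, 0⟩
  set j : ℍ[ℝ] := ⟨0, 0, 1, 0⟩
  have hi : ‖i‖ = 1 := norm_eq_one_iff_normSq_eq_one.mpr ((normSq_def' i).trans (by norm_num [i]))
  have hj : ‖j‖ = 1 := norm_eq_one_iff_normSq_eq_one.mpr ((normSq_def' j).trans (by norm_num [j]))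
  by_cases hiu : i ≠ u ∧ i ≠ -u
  · exact ⟨i, rfl, hi, hiu⟩
  refine ⟨j, rfl, hj, ?_⟩
  rw [not_and_or, not_not, not_not, eq_comm (b := -u), neg_eq_iff_eq_neg] at hiu
  have hiJ : i.imJ = 0 := rfl
  have hjJ : j.imJ = 1 := rfl
  rcases hiu with rfl | rfl <;> constructor <;> intro h <;>
    simpa [hiJ, hjJ] using congrArg QuaternionAlgebra.imJ h

theorem isConj_of_re_eq_zero_of_norm_eq_one {u v : ℍ[ℝ]} (hu : u.re = 0) (hu₁ : ‖u‖ = 1)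
    (hv : v.re = 0) (hv₁ : ‖v‖ = 1) : IsConj u v :=
  let ⟨_m, hm, hm₁, hmu, hmu'⟩ := exists_re_eq_zero_norm_eq_one_ne_ne_neg u
  isConj_of_mul_self_eq_neg_one (mul_self_eq_neg_one hu hu₁) (mul_self_eq_neg_one hv hv₁)
    (mul_self_eq_neg_one hm hm₁) hmu hmu'

theorem exists_re_eq_zero_norm_eq_one_smul_eq_iff {w : ℍ[ℝ]} {r : ℝ} (hr : 0 ≤ r) :
    (∃ i : ℍ[ℝ], i.re = 0 ∧ ‖i‖ = 1 ∧ w = r • i) ↔ w.re = 0 ∧ ‖w‖ = r := by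
  constructor
  · rintro ⟨i, hi, hi₁, rfl⟩
    exact ⟨by rw [re_smul, hi, smul_zero], by rw [norm_smul, hi₁, mul_one, Real.norm_of_nonneg hr]⟩
  · rintro ⟨hw, rfl⟩
    obtain rfl | hw₀ := eq_or_ne w 0
    · obtain ⟨i, hi, hi₁, -⟩ := exists_re_eq_zero_norm_eq_one_ne_ne_neg 0
      exact ⟨i, hi, hi₁, by rw [norm_zero, zero_smul]⟩
    refine ⟨‖w‖⁻¹ • w, by rw [re_smul, hw, smul_zero], norm_smul_inv_norm hw₀, ?_⟩
    rw [smul_smul, mul_inv_cancel₀ (norm_ne_zero_iff.mpr hw₀), one_smul]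

theorem re_mul_comm {R : Type*} [CommRing R] (a b : ℍ[R]) : (a * b).re = (b * a).re := by
  simp only [re_mul]
  ring

theorem re_mul_mul_inv {c : ℍ[ℝ]} (hc : c ≠ 0) (a : ℍ[ℝ]) : (c * a * c⁻¹).re = a.re := by
  rw [re_mul_comm, ← mul_assoc, inv_mul_cancel₀ hc, one_mul]

theorem norm_mul_mul_inv {c : ℍ[ℝ]} (hc : c ≠ 0) (a : ℍ[ℝ]) : ‖c * a * c⁻¹‖ = ‖a‖ := by
  rw [norm_mul, norm_mul, norm_inv, mul_comm ‖c‖, mul_assoc,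
    mul_inv_cancel₀ (norm_ne_zero_iff.mpr hc), mul_one]

theorem isConj_iff_re_eq_zero_and_norm_eq {a b : ℍ[ℝ]} (ha : a.re = 0) :
    IsConj a b ↔ b.re = 0 ∧ ‖b‖ = ‖a‖ := by
  constructor
  · rw [GroupWithZero.isConj_iff₀]
    rintro ⟨c, hc, rfl⟩
    exact ⟨(re_mul_mul_inv hc a).trans ha, norm_mul_mul_inv hc a⟩
  · rintro ⟨hb, hba⟩
    obtain ⟨u, hu, hu₁, hau⟩ :=
      (exists_re_eq_zero_norm_eq_one_smul_eq_iff (norm_nonneg a)).mpr ⟨ha, rfl⟩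
    obtain ⟨v, hv, hv₁, hbv⟩ :=
      (exists_re_eq_zero_norm_eq_one_smul_eq_iff (norm_nonneg a)).mpr ⟨hb, hba⟩
    rw [hau, hbv]
    exact (isConj_of_re_eq_zero_of_norm_eq_one hu hu₁ hv hv₁).smul ‖a‖

theorem inv_mul_mul_eq_coe_re_add {q : ℍ[ℝ]} (hq : q ≠ 0) (x : ℍ[ℝ]) :
    q⁻¹ * x * q = x.re + q⁻¹ * x.im * q := by
  conv_lhs => rw [← x.re_add_im]
  rw [mul_add, add_mul, mul_assoc q⁻¹, coe_commutes, inv_mul_cancel_left₀ hq]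

end Quaternion

/-- A quaternion `y` belongs to the 2-sphere `[x] = {x₀ + i x₁ : i ∈ 𝕊}`, where
`x₀ = Re x` and `x₁ = |Im x|`, if and only if `y = q⁻¹ * x * q` for some unit
quaternion `q`. -/
theorem mem_sphere_iff_exists_unit_conjugate (x y : ℍ[ℝ]) :
    (∃ i : ℍ[ℝ], i.re = 0 ∧ ‖i‖ = 1 ∧ y = (x.re : ℍ[ℝ]) + ‖x.im‖ • i) ↔
      (∃ q : ℍ[ℝ], ‖q‖ = 1 ∧ y = q⁻¹ * x * q) :=
  calc (∃ i : ℍ[ℝ], i.re = 0 ∧ ‖i‖ = 1 ∧ y = (x.re : ℍ[ℝ]) + ‖x.im‖ • i)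
      ↔ (y - x.re).re = 0 ∧ ‖y - x.re‖ = ‖x.im‖ := by
        simp only [← sub_eq_iff_eq_add']
        exact exists_re_eq_zero_norm_eq_one_smul_eq_iff (norm_nonneg _)
    _ ↔ IsConj x.im (y - x.re) := (isConj_iff_re_eq_zero_and_norm_eq (re_im x)).symm
    _ ↔ ∃ q : ℍ[ℝ], ‖q‖ = 1 ∧ y - x.re = q⁻¹ * x.im * q := isConj_iff_exists_norm_eq_one
    _ ↔ ∃ q : ℍ[ℝ], ‖q‖ = 1 ∧ y = q⁻¹ * x * q := by
        refine exists_congr fun q => and_congr_right fun hq => ?_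
        rw [inv_mul_mul_eq_coe_re_add (norm_ne_zero_iff.mp (hq.trans_ne one_ne_zero)) x,
          sub_eq_iff_eq_add']
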